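/- Let h be the 5-dimensional real Lie algebra with Maurer–Cartan relations dθ^1=0, dθ^2=-θ^1∧θ^2, dθ^3=θ^1∧θ^3, dθ^4=2θ^1∧θ^4, dθ^5=θ^2∧θ^3. Then H^2_{-θ^1}(h) is three-dimensional, spanned by the classes of θ^1∧θ^3, θ^2∧θ^4, and θ^3∧θ^5. -/

import Mathlib

open scoped BigOperators

/-- The space of real-valued `k`-cochains on `L` (as bare functions). -/
abbrev Cochain (L : Type*) (k : ℕ) := (Fin k → L) → ℝ

variable {L : Type*} [LieRing L] [LieAlgebra ℝ L]

/-- A cochain is an alternating multilinear map, i.e. an element of `Hom(Λ^k g, ℝ)`. -/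
def IsAltMap {k : ℕ} (θ : Cochain L k) : Prop :=
  ∃ f : AlternatingMap ℝ L ℝ (Fin k), ⇑f = θ

/-- The Chevalley–Eilenberg differential with trivial coefficients:
`(dθ)(X_0,…,X_k) = ∑_{p<q} (-1)^{p+q} θ([X_p,X_q],X_0,…,X̂_p,…,X̂_q,…,X_k)`. -/
def CEd : {k : ℕ} → Cochain L k → Cochain L (k + 1)
  | 0, _ => fun _ => 0
  | (k + 1), θ => fun X =>
      ∑ p : Fin (k + 2), ∑ q : Fin (k + 2),
        if h : (p : ℕ) < (q : ℕ) then
          ((-1 : ℝ) ^ ((p : ℕ) + (q : ℕ))) *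
            θ (Fin.cons ⁅X p, X q⁆
                (Fin.removeNth ⟨(p : ℕ), lt_of_lt_of_le h (Nat.lt_succ_iff.mp q.isLt)⟩
                  (Fin.removeNth q X)))
        else 0

/-- The wedge product `ω ∧ θ` of a 1-cochain with a `k`-cochain. -/
def oneWedge {k : ℕ} (ω : L → ℝ) (θ : Cochain L k) : Cochain L (k + 1) :=
  fun X => ∑ i : Fin (k + 1), ((-1 : ℝ) ^ (i : ℕ)) * ω (X i) * θ (Fin.removeNth i X)

/-- The deformed differential `d_{λω} θ = dθ + λ ω ∧ θ`. -/
def dDef {k : ℕ} (lam : ℝ) (ω : L → ℝ) (θ : Cochain L k) : Cochain L (k + 1) :=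
  CEd θ + lam • oneWedge ω θ

/-- The submodule of alternating multilinear `k`-cochains, i.e. `C^k(g,ℝ) = Hom(Λ^k g, ℝ)`. -/
def AltSub (L : Type*) [LieRing L] [LieAlgebra ℝ L] (k : ℕ) : Submodule ℝ (Cochain L k) where
  carrier := {θ | IsAltMap θ}
  add_mem' := by rintro θ₁ θ₂ ⟨f, rfl⟩ ⟨g, rfl⟩; exact ⟨f + g, rfl⟩
  zero_mem' := ⟨0, rfl⟩
  smul_mem' := by rintro c θ ⟨f, rfl⟩; exact ⟨c • f, rfl⟩

/-- The Chevalley–Eilenberg differential as a linear map. -/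
def CEdL (L : Type*) [LieRing L] [LieAlgebra ℝ L] (k : ℕ) :
    Cochain L k →ₗ[ℝ] Cochain L (k + 1) where
  toFun := CEd
  map_add' θ₁ θ₂ := by
    cases k with
    | zero => funext X; exact (zero_add (0:ℝ)).symm
    | succ k =>
      funext X
      show _ = CEd θ₁ X + CEd θ₂ X
      simp only [CEd, Pi.add_apply]
      rw [← Finset.sum_add_distrib]
      refine Finset.sum_congr rfl fun p _ => ?_
      rw [← Finset.sum_add_distrib]
      refine Finset.sum_congr rfl fun q _ => ?_
      split_ifs <;> simp [mul_add]
  map_smul' c θ := by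
    cases k with
    | zero => funext X; exact (smul_zero c).symm
    | succ k =>
      funext X
      show _ = c * CEd θ X
      simp only [CEd, Pi.smul_apply, smul_eq_mul]
      rw [Finset.mul_sum]
      refine Finset.sum_congr rfl fun p _ => ?_
      rw [Finset.mul_sum]
      refine Finset.sum_congr rfl fun q _ => ?_
      split_ifs with h
      · ring
      · exact (mul_zero c).symm

/-- The operator `θ ↦ ω ∧ θ` as a linear map. -/
def oneWedgeL (L : Type*) [LieRing L] [LieAlgebra ℝ L] (ω : L → ℝ) (k : ℕ) :
    Cochain L k →ₗ[ℝ] Cochain L (k + 1) where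
  toFun := oneWedge ω
  map_add' θ₁ θ₂ := by
    funext X
    simp [oneWedge, mul_add, Finset.sum_add_distrib]
  map_smul' c θ := by
    funext X
    simp only [oneWedge, Pi.smul_apply, smul_eq_mul, RingHom.id_apply]
    rw [Finset.mul_sum]
    exact Finset.sum_congr rfl fun i _ => by ring

/-- The deformed differential `d_{λω}` as a linear map. -/
noncomputable def dDefL (L : Type*) [LieRing L] [LieAlgebra ℝ L]
    (lam : ℝ) (ω : L → ℝ) (k : ℕ) : Cochain L k →ₗ[ℝ] Cochain L (k + 1) :=
  CEdL L k + lam • oneWedgeL L ω k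

/-- Deformed `k`-cocycles: alternating cochains with `d_{λω} θ = 0`. -/
noncomputable def Zdef (L : Type*) [LieRing L] [LieAlgebra ℝ L]
    (lam : ℝ) (ω : L → ℝ) (k : ℕ) : Submodule ℝ (Cochain L k) :=
  AltSub L k ⊓ LinearMap.ker (dDefL L lam ω k)

/-- Deformed `(k+1)`-coboundaries: images under `d_{λω}` of alternating `k`-cochains. -/
noncomputable def Bdef (L : Type*) [LieRing L] [LieAlgebra ℝ L]
    (lam : ℝ) (ω : L → ℝ) (k : ℕ) : Submodule ℝ (Cochain L (k + 1)) :=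
  Submodule.map (dDefL L lam ω k) (AltSub L k)

/-- The deformed cohomology `H^{k+1}_{λω}(g)` = closed forms modulo exact forms. -/
noncomputable abbrev Hdef (L : Type*) [LieRing L] [LieAlgebra ℝ L]
    (lam : ℝ) (ω : L → ℝ) (k : ℕ) :=
  Zdef L lam ω (k + 1) ⧸
    Submodule.comap (Zdef L lam ω (k + 1)).subtype (Bdef L lam ω k)

/-- The 1-cochain associated to a linear functional. -/
def c1 {L : Type*} (f : L → ℝ) : Cochain L 1 := fun X => f (X 0)

/-- The wedge product `f ∧ g` of two 1-forms, as a 2-cochain. -/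
def w2 {L : Type*} (f g : L → ℝ) : Cochain L 2 :=
  fun X => f (X 0) * g (X 1) - f (X 1) * g (X 0)

/-!
A `d_{-θ^1}`-cocycle `f` satisfies `f(X_2,X_5) = f(X_3,X_4) = f(X_4,X_5) = 0` and
`f(X_1,X_5) = -f(X_2,X_3)`. The coboundaries are spanned by `d_{-θ^1}θ^2 = -2 θ^1∧θ^2`,
`d_{-θ^1}θ^4 = θ^1∧θ^4` and `d_{-θ^1}θ^5 = θ^2∧θ^3 - θ^1∧θ^5`, which all vanish on the pairs
`(X_1,X_3)`, `(X_2,X_4)`, `(X_3,X_5)`. So evaluation on these pairs descends to a map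
`H^2_{-θ^1}(h) → ℝ^3` sending the classes of `θ^1∧θ^3`, `θ^2∧θ^4`, `θ^3∧θ^5` to the standard
basis, and subtracting from a cocycle the matching combination of these three forms leaves an
explicit coboundary.
-/

namespace AlternatingMap

variable {R M N : Type*} [CommRing R] [AddCommGroup M] [Module R M] [AddCommGroup N] [Module R N]

def wedge₂ (f g : M →ₗ[R] R) : M [⋀^Fin 2]→ₗ[R] R where
  toFun X := f (X 0) * g (X 1) - f (X 1) * g (X 0)
  map_update_add' X i x y := by
    fin_cases i <;> simp [Function.update_of_ne] <;> ring
  map_update_smul' X i c x := by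
    fin_cases i <;> simp [Function.update_of_ne] <;> ring
  map_eq_zero_of_eq' X i j hij hne := by
    fin_cases i <;> fin_cases j <;> simp_all

def toBilin (f : M [⋀^Fin 2]→ₗ[R] N) : M →ₗ[R] M →ₗ[R] N :=
  (curryLeftLinearMap ∘ₗ f.curryLeft).compr₂
    (constLinearEquivOfIsEmpty (ι := Fin 0)).symm.toLinearMap

theorem toBilin_apply (f : M [⋀^Fin 2]→ₗ[R] N) (x y : M) : f.toBilin x y = f ![x, y] :=
  congr_arg f <| congr_arg _ <| congr_arg _ <| Subsingleton.elim _ _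

theorem apply_vecCons_swap (f : M [⋀^Fin 2]→ₗ[R] N) (x y : M) : f ![y, x] = -f ![x, y] := by
  have h : ![x, y] ∘ Equiv.swap (0 : Fin 2) 1 = ![y, x] := by
    funext i; fin_cases i <;> rfl
  rw [← h, f.map_swap _ (by decide)]

theorem apply_vecCons_self (f : M [⋀^Fin 2]→ₗ[R] N) (x : M) : f ![x, x] = 0 :=
  f.map_eq_zero_of_eq ![x, x] (i := 0) (j := 1) rfl (by decide)

theorem apply_eq_sum_basis {ι : Type*} [Fintype ι] (E : Module.Basis ι R M)
    (f : M [⋀^Fin 2]→ₗ[R] N) (X : Fin 2 → M) :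
    f X = ∑ i, ∑ j, (E.repr (X 0) i * E.repr (X 1) j) • f ![E i, E j] := by
  have hX : X = ![X 0, X 1] := by funext i; fin_cases i <;> rfl
  rw [show f X = f ![X 0, X 1] from congr_arg f hX, ← toBilin_apply]
  conv_lhs => rw [← E.sum_repr (X 0), ← E.sum_repr (X 1)]
  simp only [map_sum, map_smul, LinearMap.sum_apply, LinearMap.smul_apply, toBilin_apply,
    Finset.smul_sum, smul_smul]
  rw [Finset.sum_comm]
  exact Finset.sum_congr rfl fun i _ => Finset.sum_congr rfl fun j _ => by rw [mul_comm]

end AlternatingMap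

namespace Submodule

variable {R M ι : Type*} [Ring R] [AddCommGroup M] [Module R M] [Fintype ι] [DecidableEq ι]

noncomputable def basisQuotientOfCoordinates (N : Submodule R M) (w : ι → M)
    (φ : M →ₗ[R] ι → R) (hN : N ≤ LinearMap.ker φ) (hw : ∀ i, φ (w i) = Pi.single i 1)
    (hdecomp : ∀ m, m - ∑ i, φ m i • w i ∈ N) : Module.Basis ι R (M ⧸ N) :=
  Module.Basis.mk (v := N.mkQ ∘ w)
    (by
      refine LinearIndependent.of_comp (N.liftQ φ hN) ?_
      have h : N.liftQ φ hN ∘ (N.mkQ ∘ w) = Pi.basisFun R ι := by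
        ext i : 1
        simp [hw]
      rw [h]
      exact (Pi.basisFun R ι).linearIndependent)
    (by
      rintro x -
      obtain ⟨m, rfl⟩ := N.mkQ_surjective x
      rw [mkQ_apply, (Quotient.eq N).mpr (hdecomp m), ← mkQ_apply]
      simp only [map_sum, map_smul]
      exact sum_mem fun i _ => smul_mem _ _ (subset_span ⟨i, rfl⟩))

theorem basisQuotientOfCoordinates_apply (N : Submodule R M) (w : ι → M)
    (φ : M →ₗ[R] ι → R) (hN : N ≤ LinearMap.ker φ) (hw : ∀ i, φ (w i) = Pi.single i 1)
    (hdecomp : ∀ m, m - ∑ i, φ m i • w i ∈ N) (i : ι) :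
    N.basisQuotientOfCoordinates w φ hN hw hdecomp i = N.mkQ (w i) :=
  Module.Basis.mk_apply _ _ _

end Submodule

section LowDegree

variable {𝔤 : Type*} (ω : 𝔤 → ℝ)

theorem oneWedge_one_apply (θ : Cochain 𝔤 1) (X : Fin 2 → 𝔤) :
    oneWedge ω θ X = ω (X 0) * θ ![X 1] - ω (X 1) * θ ![X 0] := by
  show (∑ i : Fin 2, _) = _
  have h0 : Fin.removeNth (0 : Fin 2) X = ![X 1] := by funext i; fin_cases i; rfl
  have h1 : Fin.removeNth (1 : Fin 2) X = ![X 0] := by funext i; fin_cases i; rfl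
  rw [Fin.sum_univ_two, h0, h1]
  norm_num
  ring

theorem oneWedge_two_apply (θ : Cochain 𝔤 2) (X : Fin 3 → 𝔤) :
    oneWedge ω θ X =
      ω (X 0) * θ ![X 1, X 2] - ω (X 1) * θ ![X 0, X 2] + ω (X 2) * θ ![X 0, X 1] := by
  show (∑ i : Fin 3, _) = _
  have h0 : Fin.removeNth (0 : Fin 3) X = ![X 1, X 2] := by funext i; fin_cases i <;> rfl
  have h1 : Fin.removeNth (1 : Fin 3) X = ![X 0, X 2] := by funext i; fin_cases i <;> rfl
  have h2 : Fin.removeNth (2 : Fin 3) X = ![X 0, X 1] := by funext i; fin_cases i <;> rfl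
  rw [Fin.sum_univ_three, h0, h1, h2]
  norm_num
  ring

variable [LieRing 𝔤]

theorem CEd_one_apply (θ : Cochain 𝔤 1) (X : Fin 2 → 𝔤) : CEd θ X = -θ ![⁅X 0, X 1⁆] := by
  show (∑ p : Fin 2, ∑ q : Fin 2, _) = _
  simp only [Fin.sum_univ_two]
  norm_num
  congr 1
  funext i; fin_cases i; rfl

theorem CEd_two_apply (θ : Cochain 𝔤 2) (X : Fin 3 → 𝔤) :
    CEd θ X = -θ ![⁅X 0, X 1⁆, X 2] + θ ![⁅X 0, X 2⁆, X 1] - θ ![⁅X 1, X 2⁆, X 0] := by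
  show (∑ p : Fin 3, ∑ q : Fin 3, _) = _
  simp only [Fin.sum_univ_three]
  norm_num
  have h01 : (Fin.cons ⁅X 0, X 1⁆ (Fin.tail (Fin.removeNth 1 X)) : Fin 2 → 𝔤)
      = ![⁅X 0, X 1⁆, X 2] := by funext i; fin_cases i <;> rfl
  have h02 : (Fin.cons ⁅X 0, X 2⁆ (Fin.tail (Fin.removeNth 2 X)) : Fin 2 → 𝔤)
      = ![⁅X 0, X 2⁆, X 1] := by funext i; fin_cases i <;> rfl
  have h12 : (Fin.cons ⁅X 1, X 2⁆ (Fin.removeNth 1 (Fin.removeNth 2 X)) : Fin 2 → 𝔤)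
      = ![⁅X 1, X 2⁆, X 0] := by funext i; fin_cases i <;> rfl
  rw [h01, h02, h12]
  ring

variable [LieAlgebra ℝ 𝔤] (lam : ℝ)

theorem dDefL_c1_apply (ℓ : 𝔤 → ℝ) (X : Fin 2 → 𝔤) :
    dDefL 𝔤 lam ω 1 (c1 ℓ) X =
      -ℓ ⁅X 0, X 1⁆ + lam * (ω (X 0) * ℓ (X 1) - ω (X 1) * ℓ (X 0)) := by
  show CEd (c1 ℓ) X + lam * oneWedge ω (c1 ℓ) X = _
  rw [CEd_one_apply, oneWedge_one_apply]
  rfl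

theorem dDefL_two_apply (θ : Cochain 𝔤 2) (X : Fin 3 → 𝔤) :
    dDefL 𝔤 lam ω 2 θ X =
      -θ ![⁅X 0, X 1⁆, X 2] + θ ![⁅X 0, X 2⁆, X 1] - θ ![⁅X 1, X 2⁆, X 0]
        + lam * (ω (X 0) * θ ![X 1, X 2] - ω (X 1) * θ ![X 0, X 2] + ω (X 2) * θ ![X 0, X 1]) := by
  show CEd θ X + lam * oneWedge ω θ X = _
  rw [CEd_two_apply, oneWedge_two_apply]

theorem c1_mem_AltSub (ℓ : 𝔤 →ₗ[ℝ] ℝ) : c1 ⇑ℓ ∈ AltSub 𝔤 1 :=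
  ⟨AlternatingMap.ofSubsingleton ℝ 𝔤 ℝ 0 ℓ, rfl⟩

theorem exists_c1_of_mem_Bdef_one {y : Cochain 𝔤 2} (hy : y ∈ Bdef 𝔤 lam ω 1) :
    ∃ ℓ : 𝔤 →ₗ[ℝ] ℝ, y = dDefL 𝔤 lam ω 1 (c1 ℓ) := by
  obtain ⟨_, ⟨g, rfl⟩, rfl⟩ := hy
  refine ⟨(AlternatingMap.ofSubsingleton ℝ 𝔤 ℝ 0).symm g, ?_⟩
  rw [← (AlternatingMap.ofSubsingleton ℝ 𝔤 ℝ 0).apply_symm_apply g]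
  rfl

end LowDegree

section StandardBasis

variable {H : Type*} [LieRing H] [LieAlgebra ℝ H]

/-- The brackets of `h`, with `E k = X_{k+1}` and hence `E.coord k = θ^{k+1}`. -/
structure IsStandardBasis (E : Module.Basis (Fin 5) ℝ H) : Prop where
  lie01 : ⁅E 0, E 1⁆ = E 1
  lie02 : ⁅E 0, E 2⁆ = -E 2
  lie03 : ⁅E 0, E 3⁆ = (-2 : ℝ) • E 3
  lie12 : ⁅E 1, E 2⁆ = -E 4
  lie04 : ⁅E 0, E 4⁆ = 0
  lie13 : ⁅E 1, E 3⁆ = 0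
  lie14 : ⁅E 1, E 4⁆ = 0
  lie23 : ⁅E 2, E 3⁆ = 0
  lie24 : ⁅E 2, E 4⁆ = 0
  lie34 : ⁅E 3, E 4⁆ = 0

variable {E : Module.Basis (Fin 5) ℝ H}

open AlternatingMap

theorem IsStandardBasis.lie_eq (hE : IsStandardBasis E) (X Y : H) :
    ⁅X, Y⁆ = (E.repr X 0 * E.repr Y 1 - E.repr X 1 * E.repr Y 0) • E 1
      + (E.repr X 2 * E.repr Y 0 - E.repr X 0 * E.repr Y 2) • E 2
      + (2 * (E.repr X 3 * E.repr Y 0 - E.repr X 0 * E.repr Y 3)) • E 3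
      + (E.repr X 2 * E.repr Y 1 - E.repr X 1 * E.repr Y 2) • E 4 := by
  have skew (a b : H) : ⁅b, a⁆ = -⁅a, b⁆ := (lie_skew b a).symm
  conv_lhs => rw [← E.sum_repr X, ← E.sum_repr Y]
  simp only [Fin.sum_univ_five, add_lie, lie_add, smul_lie, lie_smul, lie_self, smul_zero,
    skew (E 0) (E 1), skew (E 0) (E 2), skew (E 0) (E 3), skew (E 0) (E 4), skew (E 1) (E 2),
    skew (E 1) (E 3), skew (E 1) (E 4), skew (E 2) (E 3), skew (E 2) (E 4), skew (E 3) (E 4),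
    hE.lie01, hE.lie02, hE.lie03, hE.lie04, hE.lie12, hE.lie13, hE.lie14, hE.lie23, hE.lie24,
    hE.lie34]
  module

/-- The Maurer–Cartan equations `dθ^1 = 0`, `dθ^2 = -θ^1∧θ^2`, `dθ^3 = θ^1∧θ^3`,
`dθ^4 = 2θ^1∧θ^4`, `dθ^5 = θ^2∧θ^3`, read through `dθ(X, Y) = -θ⁅X, Y⁆`. -/
theorem IsStandardBasis.repr_lie (hE : IsStandardBasis E) (X Y : H) :
    E.repr ⁅X, Y⁆ 0 = 0 ∧
    E.repr ⁅X, Y⁆ 1 = E.repr X 0 * E.repr Y 1 - E.repr X 1 * E.repr Y 0 ∧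
    E.repr ⁅X, Y⁆ 2 = E.repr X 2 * E.repr Y 0 - E.repr X 0 * E.repr Y 2 ∧
    E.repr ⁅X, Y⁆ 3 = 2 * (E.repr X 3 * E.repr Y 0 - E.repr X 0 * E.repr Y 3) ∧
    E.repr ⁅X, Y⁆ 4 = E.repr X 2 * E.repr Y 1 - E.repr X 1 * E.repr Y 2 := by
  rw [hE.lie_eq X Y]
  refine ⟨?_, ?_, ?_, ?_, ?_⟩ <;> simp

theorem IsStandardBasis.cocycle_relations (hE : IsStandardBasis E) (f : H [⋀^Fin 2]→ₗ[ℝ] ℝ)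
    (hf : dDefL H (-1) (E.coord 0) 2 f = 0) :
    f ![E 1, E 4] = 0 ∧ f ![E 2, E 3] = 0 ∧ f ![E 3, E 4] = 0 ∧ f ![E 0, E 4] = -f ![E 1, E 2] := by
  have e014 := congrFun hf ![E 0, E 1, E 4]
  have e023 := congrFun hf ![E 0, E 2, E 3]
  have e034 := congrFun hf ![E 0, E 3, E 4]
  have e012 := congrFun hf ![E 0, E 1, E 2]
  simp +decide only [dDefL_two_apply, Matrix.cons_val_zero, Matrix.cons_val_one,
    Matrix.cons_val_two, Matrix.head_cons, Matrix.tail_cons, hE.lie01, hE.lie02, hE.lie03,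
    hE.lie04, hE.lie12, hE.lie14, hE.lie23, hE.lie34, ← toBilin_apply, map_neg, map_smul,
    _root_.map_zero, LinearMap.neg_apply, LinearMap.smul_apply, LinearMap.zero_apply, smul_eq_mul,
    Module.Basis.coord_apply, Module.Basis.repr_self_apply, ↓reduceIte, Pi.zero_apply]
    at e014 e023 e034 e012
  simp only [toBilin_apply] at e014 e023 e034 e012
  rw [apply_vecCons_swap f (E 2) (E 3)] at e023
  rw [apply_vecCons_swap f (E 1) (E 2), apply_vecCons_swap f (E 0) (E 4)] at e012
  exact ⟨by linarith, by linarith, by linarith, by linarith⟩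

def classPair : Fin 3 → Fin 5 × Fin 5 := ![(0, 2), (1, 3), (2, 4)]

variable (E) in
noncomputable def classRep (i : Fin 3) : Cochain H 2 :=
  w2 (E.coord (classPair i).1) (E.coord (classPair i).2)

variable (E) in
noncomputable def evalPairs : Cochain H 2 →ₗ[ℝ] Fin 3 → ℝ :=
  LinearMap.pi fun i => LinearMap.proj ![E (classPair i).1, E (classPair i).2]

theorem evalPairs_classRep (i : Fin 3) : evalPairs E (classRep E i) = Pi.single i 1 := by
  funext j
  fin_cases i <;> fin_cases j <;>
    simp +decide [evalPairs, classRep, classPair, w2]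

theorem IsStandardBasis.classRep_mem_Zdef (hE : IsStandardBasis E) (i : Fin 3) :
    classRep E i ∈ Zdef H (-1) (E.coord 0) 2 := by
  refine ⟨⟨wedge₂ (E.coord _) (E.coord _), rfl⟩, LinearMap.mem_ker.mpr (funext fun X => ?_)⟩
  obtain ⟨r010, r011, r012, r013, r014⟩ := hE.repr_lie (X 0) (X 1)
  obtain ⟨r020, r021, r022, r023, r024⟩ := hE.repr_lie (X 0) (X 2)
  obtain ⟨r120, r121, r122, r123, r124⟩ := hE.repr_lie (X 1) (X 2)
  rw [dDefL_two_apply]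
  fin_cases i <;>
    simp only [classRep, classPair, w2, Module.Basis.coord_apply, Fin.reduceFinMk, Fin.isValue,
      Matrix.cons_val_zero, Matrix.cons_val_one, Matrix.cons_val_two, Matrix.head_cons,
      Matrix.tail_cons, Pi.zero_apply, r010, r011, r012, r013, r014, r020, r021, r022, r023, r024,
      r120, r121, r122, r123, r124] <;> ring

theorem IsStandardBasis.evalPairs_eq_zero_of_mem_Bdef (hE : IsStandardBasis E) {y : Cochain H 2}
    (hy : y ∈ Bdef H (-1) (E.coord 0) 1) : evalPairs E y = 0 := by
  obtain ⟨ℓ, rfl⟩ := exists_c1_of_mem_Bdef_one _ _ hy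
  funext i
  fin_cases i <;>
    simp +decide [evalPairs, classPair, dDefL_c1_apply, hE.lie02, hE.lie13, hE.lie24]

variable (E) in
/-- Read off from `d_{-θ^1}θ^2 = -2 θ^1∧θ^2`, `d_{-θ^1}θ^4 = θ^1∧θ^4` and
`d_{-θ^1}θ^5 = θ^2∧θ^3 - θ^1∧θ^5`. -/
noncomputable def cocyclePrimitive (f : Cochain H 2) : H →ₗ[ℝ] ℝ :=
  (-f ![E 0, E 1] / 2) • E.coord 1 + f ![E 0, E 3] • E.coord 3 + f ![E 1, E 2] • E.coord 4

theorem IsStandardBasis.dDefL_cocyclePrimitive (hE : IsStandardBasis E) (f : H [⋀^Fin 2]→ₗ[ℝ] ℝ)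
    (hf : dDefL H (-1) (E.coord 0) 2 f = 0) :
    dDefL H (-1) (E.coord 0) 1 (c1 (cocyclePrimitive E f)) =
      f - ∑ i, evalPairs E f i • classRep E i := by
  obtain ⟨r14, r23, r34, r04⟩ := hE.cocycle_relations f hf
  funext X
  obtain ⟨-, q1, -, q3, q4⟩ := hE.repr_lie (X 0) (X 1)
  rw [dDefL_c1_apply, Pi.sub_apply, f.apply_eq_sum_basis E X]
  simp only [Finset.sum_apply, Pi.smul_apply, smul_eq_mul, Fin.sum_univ_five, Fin.sum_univ_three,
    cocyclePrimitive, evalPairs, classRep, classPair, w2, LinearMap.add_apply, LinearMap.smul_apply,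
    LinearMap.pi_apply, LinearMap.proj_apply, Module.Basis.coord_apply, Matrix.cons_val_zero,
    Matrix.cons_val_one, Matrix.cons_val_two, Matrix.head_cons, Matrix.tail_cons, q1, q3, q4,
    apply_vecCons_self, apply_vecCons_swap f (E 0) (E 1), apply_vecCons_swap f (E 0) (E 2),
    apply_vecCons_swap f (E 0) (E 3), apply_vecCons_swap f (E 0) (E 4),
    apply_vecCons_swap f (E 1) (E 2), apply_vecCons_swap f (E 1) (E 3),
    apply_vecCons_swap f (E 1) (E 4), apply_vecCons_swap f (E 2) (E 3),
    apply_vecCons_swap f (E 2) (E 4), apply_vecCons_swap f (E 3) (E 4), r14, r23, r34, r04]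
  ring

theorem IsStandardBasis.sub_sum_evalPairs_mem_Bdef (hE : IsStandardBasis E) {z : Cochain H 2}
    (hz : z ∈ Zdef H (-1) (E.coord 0) 2) :
    z - ∑ i, evalPairs E z i • classRep E i ∈ Bdef H (-1) (E.coord 0) 1 := by
  obtain ⟨⟨f, rfl⟩, hf⟩ := hz
  exact ⟨c1 (cocyclePrimitive E f), c1_mem_AltSub _, hE.dDefL_cocyclePrimitive f hf⟩

noncomputable def IsStandardBasis.cohomologyBasis (hE : IsStandardBasis E) :
    Module.Basis (Fin 3) ℝ (Hdef H (-1) (E.coord 0) 1) :=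
  Submodule.basisQuotientOfCoordinates _ (fun i => ⟨classRep E i, hE.classRep_mem_Zdef i⟩)
    (evalPairs E ∘ₗ Submodule.subtype _)
    (fun _ hz => LinearMap.mem_ker.mpr (hE.evalPairs_eq_zero_of_mem_Bdef hz))
    evalPairs_classRep
    (fun z => by simpa using hE.sub_sum_evalPairs_mem_Bdef z.2)

theorem IsStandardBasis.cohomologyBasis_apply (hE : IsStandardBasis E) (i : Fin 3) :
    hE.cohomologyBasis i = Submodule.Quotient.mk ⟨classRep E i, hE.classRep_mem_Zdef i⟩ :=
  Submodule.basisQuotientOfCoordinates_apply ..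

end StandardBasis

/-- `H^2_{-θ^1}(h)` is three-dimensional, spanned by the classes of
`θ^1∧θ^3`, `θ^2∧θ^4` and `θ^3∧θ^5`. -/
theorem H2_deformed_neg_one
    (H : Type*) [LieRing H] [LieAlgebra ℝ H] (E : Module.Basis (Fin 5) ℝ H)
    (b01 : ⁅E 0, E 1⁆ = E 1) (b02 : ⁅E 0, E 2⁆ = -E 2)
    (b03 : ⁅E 0, E 3⁆ = (-2 : ℝ) • E 3) (b12 : ⁅E 1, E 2⁆ = -E 4)
    (b04 : ⁅E 0, E 4⁆ = 0) (b13 : ⁅E 1, E 3⁆ = 0) (b14 : ⁅E 1, E 4⁆ = 0)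
    (b23 : ⁅E 2, E 3⁆ = 0) (b24 : ⁅E 2, E 4⁆ = 0) (b34 : ⁅E 3, E 4⁆ = 0) :
    Module.finrank ℝ (Hdef H (-1) (fun v => E.repr v 0) 1) = 3 ∧
    ∃ (h13 : w2 (fun v => E.repr v 0) (fun v => E.repr v 2) ∈
        Zdef H (-1) (fun v => E.repr v 0) 2)
      (h24 : w2 (fun v => E.repr v 1) (fun v => E.repr v 3) ∈
        Zdef H (-1) (fun v => E.repr v 0) 2)
      (h35 : w2 (fun v => E.repr v 2) (fun v => E.repr v 4) ∈
        Zdef H (-1) (fun v => E.repr v 0) 2),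
      Submodule.span ℝ
        ({Submodule.Quotient.mk
            (⟨w2 (fun v => E.repr v 0) (fun v => E.repr v 2), h13⟩ :
              Zdef H (-1) (fun v => E.repr v 0) 2),
          Submodule.Quotient.mk
            (⟨w2 (fun v => E.repr v 1) (fun v => E.repr v 3), h24⟩ :
              Zdef H (-1) (fun v => E.repr v 0) 2),
          Submodule.Quotient.mk
            (⟨w2 (fun v => E.repr v 2) (fun v => E.repr v 4), h35⟩ :
              Zdef H (-1) (fun v => E.repr v 0) 2)} :
          Set (Hdef H (-1) (fun v => E.repr v 0) 1)) = ⊤ := by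
  have hE : IsStandardBasis E := ⟨b01, b02, b03, b12, b04, b13, b14, b23, b24, b34⟩
  have hrange : Set.range hE.cohomologyBasis =
      {hE.cohomologyBasis 0, hE.cohomologyBasis 1, hE.cohomologyBasis 2} := by
    ext; simp [Fin.exists_fin_succ, eq_comm]
  refine ⟨Module.finrank_eq_card_basis hE.cohomologyBasis, hE.classRep_mem_Zdef 0,
    hE.classRep_mem_Zdef 1, hE.classRep_mem_Zdef 2, ?_⟩
  have hspan := hE.cohomologyBasis.span_eq
  rw [hrange] at hspan
  simp only [hE.cohomologyBasis_apply] at hspan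
  exact hspan
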